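/- arXiv:2404.00932 — 2 statements merged into one kernel-verified Lean document; each statement's English description precedes it below -/
import Mathlib

section
/- Let p be a prime, Λ = ℤ_p[[T]], G a finite p-group, and R = Λ[G]. Let 0 → M' → M → P → 0 be a short exact sequence of finitely generated Λ-torsion R-modules, each of projective dimension at most 1 over Λ, such that P has projective dimension at most 1 over R. Then r_n(M') = r_n(M) for all n ≥ 2, and r_1(M') − r_0(M') = r_1(M) − r_0(M). -/
section core

variable (p : ℕ) [Fact p.Prime]

/-- The Iwasawa algebra `Λ = ℤ_p[[T]]`. -/
abbrev Lam (p : ℕ) [Fact p.Prime] : Type := PowerSeries ℤ_[p]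

/-- The group ring `R = Λ[G] = ℤ_p[[T]][G]`. -/
abbrev Rg (p : ℕ) [Fact p.Prime] (G : Type) [Group G] : Type :=
  MonoidAlgebra (Lam p) G

/-- `gen_R(M)`: the minimal number of generators of `M` as an `R`-module. -/
noncomputable def minGen (R M : Type) [Semiring R] [AddCommMonoid M] [Module R M] : ℕ :=
  sInf {n | ∃ s : Finset M, s.card = n ∧ Submodule.span R (s : Set M) = ⊤}

/-- `M` admits a minimal free resolution `⋯ → R^{r 1} → R^{r 0} → M → 0` whose `n`-th free
module has rank `r n`; the minimality is expressed by the requirement that all entries of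
the maps `d n : R^{r (n+1)} → R^{r n}` lie in the Jacobson radical `J` of `R`.  (The ranks
`r n` are independent of the choice of a minimal free resolution, and equal
`dim_{F_p} Tor_n^R(F_p, M)`.) -/
def IsMinResRanks (R : Type) [Ring R] (J : Ideal R) (M : Type) [AddCommGroup M]
    [Module R M] (r : ℕ → ℕ) : Prop :=
  ∃ (d : ∀ n, ((Fin (r (n+1)) → R) →ₗ[R] (Fin (r n) → R)))
    (ε : ((Fin (r 0) → R)) →ₗ[R] M),
    Function.Surjective ε ∧
    LinearMap.range (d 0) = LinearMap.ker ε ∧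
    (∀ n, LinearMap.range (d (n+1)) = LinearMap.ker (d n)) ∧
    (∀ n x i, d n x i ∈ J)

/-- For a finitely generated module over a Noetherian local ring: the projective dimension
of `M` over `R` is at most one, i.e. there is an exact sequence
`0 → R^a → R^b → M → 0`. -/
def HasPdLeOne (R M : Type) [Ring R] [AddCommGroup M] [Module R M] : Prop :=
  ∃ (a b : ℕ) (g : (Fin a → R) →ₗ[R] (Fin b → R)) (f : (Fin b → R) →ₗ[R] M),
    Function.Injective g ∧ Function.Surjective f ∧ LinearMap.range g = LinearMap.ker f

variable (G : Type) [Group G]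

/-- the augmentation `Λ[G] → Λ`, `g ↦ 1`. -/
noncomputable def augToLam : Rg p G →+* Lam p :=
  (MonoidAlgebra.lift (Lam p) (Lam p) G 1).toRingHom

/-- the homomorphism `R = Λ[G] → ℤ_p` with `g ↦ 1` (`g ∈ G`) and `T ↦ 0`. -/
noncomputable def augToZp : Rg p G →+* ℤ_[p] :=
  (PowerSeries.constantCoeff (R := ℤ_[p])).comp (augToLam p G)

/-- the residue map `R → F_p` of the local ring `R = Λ[G]`. -/
noncomputable def augRes : Rg p G →+* ZMod p :=
  (PadicInt.toZMod).comp (augToZp p G)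

/-- the maximal ideal (= Jacobson radical) of the local ring `R = Λ[G]`, namely the kernel
of the residue map `R → F_p`. -/
noncomputable def radR : Ideal (Rg p G) := RingHom.ker (augRes p G)

/-- `ℤ_p` as an `R = Λ[G]`-module with trivial `G`-action and with `T` acting as `0`. -/
noncomputable instance : Module (Rg p G) ℤ_[p] := Module.compHom ℤ_[p] (augToZp p G)

end core


section Aux

open LinearMap


section Helpers

variable {S : Type} [Ring S]

lemma lift_of_range_le {m : ℕ} {B C : Type} [AddCommGroup B] [AddCommGroup C]
    [Module S B] [Module S C] (h : (Fin m → S) →ₗ[S] B) (q : C →ₗ[S] B)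
    (hle : LinearMap.range h ≤ LinearMap.range q) :
    ∃ l : (Fin m → S) →ₗ[S] C, q ∘ₗ l = h := by
  have hq' : Function.Surjective q.rangeRestrict := surjective_rangeRestrict q
  set h' : (Fin m → S) →ₗ[S] LinearMap.range q :=
    h.codRestrict (LinearMap.range q) (fun x => hle ⟨x, rfl⟩) with hh'
  obtain ⟨l, hl⟩ := Module.projective_lifting_property q.rangeRestrict h' hq'
  refine ⟨l, LinearMap.ext fun x => ?_⟩
  have h2 := LinearMap.congr_fun hl x
  exact congrArg Subtype.val h2

end Helpers

section Chain

variable {S : Type} [Ring S] {M : Type} [AddCommGroup M] [Module S M]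

lemma exists_chainMap
    (r s : ℕ → ℕ)
    (d : ∀ n, (Fin (r (n+1)) → S) →ₗ[S] (Fin (r n) → S))
    (e : (Fin (r 0) → S) →ₗ[S] M)
    (hd0 : e ∘ₗ d 0 = 0) (hdd : ∀ n, d n ∘ₗ d (n+1) = 0)
    (dG : ∀ n, (Fin (s (n+1)) → S) →ₗ[S] (Fin (s n) → S))
    (eG : (Fin (s 0) → S) →ₗ[S] M)
    (heG : Function.Surjective eG)
    (h0G : LinearMap.range (dG 0) = LinearMap.ker eG)
    (hG : ∀ n, LinearMap.range (dG (n+1)) = LinearMap.ker (dG n)) :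
    ∃ f : ∀ n, (Fin (r n) → S) →ₗ[S] (Fin (s n) → S),
      eG ∘ₗ f 0 = e ∧ ∀ n, dG n ∘ₗ f (n+1) = f n ∘ₗ d n := by
  obtain ⟨f0, hf0⟩ : ∃ f0, eG ∘ₗ f0 = e := by
    apply lift_of_range_le
    rw [LinearMap.range_eq_top.mpr heG]; exact le_top
  obtain ⟨f1, hf1⟩ : ∃ f1, dG 0 ∘ₗ f1 = f0 ∘ₗ d 0 := by
    apply lift_of_range_le
    rw [h0G]
    rintro y ⟨x, rfl⟩
    show eG ((f0 ∘ₗ d 0) x) = 0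
    have h1 : eG (f0 (d 0 x)) = e (d 0 x) := LinearMap.congr_fun hf0 (d 0 x)
    have h2 : e (d 0 x) = 0 := LinearMap.congr_fun hd0 x
    simpa [h1] using h2
  have step : ∀ n (fn : (Fin (r n) → S) →ₗ[S] (Fin (s n) → S))
      (fn1 : (Fin (r (n+1)) → S) →ₗ[S] (Fin (s (n+1)) → S)),
      dG n ∘ₗ fn1 = fn ∘ₗ d n →
      ∃ fn2, dG (n+1) ∘ₗ fn2 = fn1 ∘ₗ d (n+1) := by
    intro n fn fn1 hrel
    apply lift_of_range_le
    rw [hG n]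
    rintro y ⟨x, rfl⟩
    show dG n ((fn1 ∘ₗ d (n+1)) x) = 0
    have h1 : dG n (fn1 (d (n+1) x)) = fn (d n (d (n+1) x)) :=
      LinearMap.congr_fun hrel (d (n+1) x)
    have h3 : d n (d (n+1) x) = 0 := LinearMap.congr_fun (hdd n) x
    simp only [LinearMap.comp_apply]
    rw [h1, h3, map_zero]
  choose stepF stepH using step
  let F : ∀ n, Σ' (fn : (Fin (r n) → S) →ₗ[S] (Fin (s n) → S))
      (fn1 : (Fin (r (n+1)) → S) →ₗ[S] (Fin (s (n+1)) → S)),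
      dG n ∘ₗ fn1 = fn ∘ₗ d n :=
    fun n => Nat.rec ⟨f0, f1, hf1⟩
      (fun n ih => ⟨ih.2.1, stepF n ih.1 ih.2.1 ih.2.2, stepH n ih.1 ih.2.1 ih.2.2⟩) n
  have hFsucc : ∀ n, (F (n+1)).1 = (F n).2.1 := fun n => rfl
  refine ⟨fun n => (F n).1, hf0, fun n => ?_⟩
  have h4 := (F n).2.2
  rw [← hFsucc n] at h4
  exact h4

lemma exists_homotopy
    (r : ℕ → ℕ)
    (d : ∀ n, (Fin (r (n+1)) → S) →ₗ[S] (Fin (r n) → S))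
    (e : (Fin (r 0) → S) →ₗ[S] M)
    (h0 : LinearMap.range (d 0) = LinearMap.ker e)
    (h : ∀ n, LinearMap.range (d (n+1)) = LinearMap.ker (d n))
    (c : ∀ n, (Fin (r n) → S) →ₗ[S] (Fin (r n) → S))
    (hc0 : e ∘ₗ c 0 = e) (hc : ∀ n, d n ∘ₗ c (n+1) = c n ∘ₗ d n) :
    ∃ t : ∀ n, (Fin (r n) → S) →ₗ[S] (Fin (r (n+1)) → S),
      (d 0 ∘ₗ t 0 = c 0 - LinearMap.id) ∧
      ∀ n, d (n+1) ∘ₗ t (n+1) = c (n+1) - LinearMap.id - t n ∘ₗ d n := by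
  have hdd : ∀ n, d n ∘ₗ d (n+1) = 0 := by
    intro n
    refine LinearMap.ext fun x => ?_
    have : d (n+1) x ∈ LinearMap.range (d (n+1)) := ⟨x, rfl⟩
    rw [h n] at this
    exact this
  obtain ⟨t0, ht0⟩ : ∃ t0, d 0 ∘ₗ t0 = c 0 - LinearMap.id := by
    apply lift_of_range_le
    rw [h0]
    rintro y ⟨x, rfl⟩
    have h1 : e (c 0 x) = e x := LinearMap.congr_fun hc0 x
    rw [LinearMap.mem_ker, LinearMap.sub_apply, LinearMap.id_apply, map_sub, h1, sub_self]
  obtain ⟨t1, ht1⟩ : ∃ t1, d 1 ∘ₗ t1 = c 1 - LinearMap.id - t0 ∘ₗ d 0 := by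
    apply lift_of_range_le
    rw [h 0]
    rintro y ⟨x, rfl⟩
    have h1 : d 0 (c 1 x) = c 0 (d 0 x) := LinearMap.congr_fun (hc 0) x
    have h2 : d 0 (t0 (d 0 x)) = c 0 (d 0 x) - (d 0 x) := by
      have := LinearMap.congr_fun ht0 (d 0 x)
      simpa using this
    rw [LinearMap.mem_ker, LinearMap.sub_apply, LinearMap.sub_apply, LinearMap.id_apply,
      LinearMap.comp_apply, map_sub, map_sub, h1, h2]
    abel
  have step : ∀ n (tn : (Fin (r n) → S) →ₗ[S] (Fin (r (n+1)) → S))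
      (tn1 : (Fin (r (n+1)) → S) →ₗ[S] (Fin (r (n+2)) → S)),
      d (n+1) ∘ₗ tn1 = c (n+1) - LinearMap.id - tn ∘ₗ d n →
      ∃ tn2, d (n+2) ∘ₗ tn2 = c (n+2) - LinearMap.id - tn1 ∘ₗ d (n+1) := by
    intro n tn tn1 hrel
    apply lift_of_range_le
    rw [h (n+1)]
    rintro y ⟨x, rfl⟩
    have h1 : d (n+1) (c (n+2) x) = c (n+1) (d (n+1) x) := LinearMap.congr_fun (hc (n+1)) x
    have h2 : d (n+1) (tn1 (d (n+1) x))
        = c (n+1) (d (n+1) x) - (d (n+1) x) - tn (d n (d (n+1) x)) := by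
      have := LinearMap.congr_fun hrel (d (n+1) x)
      simpa using this
    have h3 : d n (d (n+1) x) = 0 := LinearMap.congr_fun (hdd n) x
    rw [LinearMap.mem_ker, LinearMap.sub_apply, LinearMap.sub_apply, LinearMap.id_apply,
      LinearMap.comp_apply, map_sub, map_sub, h1, h2, h3, map_zero]
    abel
  choose stepF stepH using step
  let T : ∀ n, Σ' (tn : (Fin (r n) → S) →ₗ[S] (Fin (r (n+1)) → S))
      (tn1 : (Fin (r (n+1)) → S) →ₗ[S] (Fin (r (n+2)) → S)),
      d (n+1) ∘ₗ tn1 = c (n+1) - LinearMap.id - tn ∘ₗ d n :=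
    fun n => Nat.rec ⟨t0, t1, ht1⟩
      (fun n ih => ⟨ih.2.1, stepF n ih.1 ih.2.1 ih.2.2, stepH n ih.1 ih.2.1 ih.2.2⟩) n
  have hTsucc : ∀ n, (T (n+1)).1 = (T n).2.1 := fun n => rfl
  refine ⟨fun n => (T n).1, ht0, fun n => ?_⟩
  have h4 := (T n).2.2
  rw [← hTsucc n] at h4
  exact h4

end Chain

section Red

variable {S k : Type} [Ring S] [CommRing k] (ρ : S →+* k)

/-- Reduction of a map of free modules along `ρ`. -/
noncomputable def redMap {m n : ℕ} (d : (Fin m → S) →ₗ[S] (Fin n → S)) :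
    (Fin m → k) →ₗ[k] (Fin n → k) :=
  Matrix.mulVecLin (fun j i => ρ (d (Pi.single i 1) j))

lemma redMap_apply {m n : ℕ} (d : (Fin m → S) →ₗ[S] (Fin n → S)) (x : Fin m → S) :
    redMap ρ d (fun i => ρ (x i)) = fun j => ρ (d x j) := by
  have hx0 : x = ∑ i, x i • (Pi.single i (1 : S) : Fin m → S) := by
    funext j
    rw [Finset.sum_apply]
    simp [Pi.single_apply]
  have hx : d x = ∑ i, x i • d (Pi.single i 1) := by
    conv_lhs => rw [hx0]
    rw [map_sum]
    simp
  funext j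
  rw [redMap]
  erw [Matrix.mulVecLin_apply]
  unfold Matrix.mulVec
  rw [hx]
  simp only [dotProduct, Finset.sum_apply, Pi.smul_apply, smul_eq_mul, map_sum, map_mul]
  exact Finset.sum_congr rfl fun i _ => mul_comm _ _

lemma red_surj (hρ : Function.Surjective ρ) {m : ℕ} (v : Fin m → k) :
    ∃ x : Fin m → S, v = fun i => ρ (x i) := by
  choose x hx using fun i => hρ (v i)
  exact ⟨x, by funext i; rw [hx]⟩

lemma redMap_comp (hρ : Function.Surjective ρ) {m n q : ℕ}
    (d2 : (Fin n → S) →ₗ[S] (Fin q → S)) (d1 : (Fin m → S) →ₗ[S] (Fin n → S)) :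
    redMap ρ (d2 ∘ₗ d1) = redMap ρ d2 ∘ₗ redMap ρ d1 := by
  refine LinearMap.ext fun v => ?_
  obtain ⟨x, rfl⟩ := red_surj ρ hρ v
  rw [LinearMap.comp_apply, redMap_apply, redMap_apply, redMap_apply]
  rfl

lemma redMap_id {m : ℕ} :
    redMap ρ (LinearMap.id : (Fin m → S) →ₗ[S] (Fin m → S)) = LinearMap.id := by
  have : (fun j i => ρ ((LinearMap.id : (Fin m → S) →ₗ[S] _) (Pi.single i 1) j))
      = (1 : Matrix (Fin m) (Fin m) k) := by
    funext j i
    simp [Matrix.one_apply, Pi.single_apply, eq_comm]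
  rw [redMap, this, Matrix.mulVecLin_one]

lemma redMap_sub {m n : ℕ} (d e : (Fin m → S) →ₗ[S] (Fin n → S)) :
    redMap ρ (d - e) = redMap ρ d - redMap ρ e := by
  have hM : (fun j i => ρ ((d - e) (Pi.single i 1) j))
      = ((fun j i => ρ (d (Pi.single i 1) j)) - (fun j i => ρ (e (Pi.single i 1) j))
        : Matrix (Fin n) (Fin m) k) := by
    funext j i
    simp [map_sub]
  refine LinearMap.ext fun v => ?_
  rw [redMap, hM]
  show Matrix.mulVec _ v = _
  erw [Matrix.sub_mulVec]
  rfl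

lemma redMap_add {m n : ℕ} (d e : (Fin m → S) →ₗ[S] (Fin n → S)) :
    redMap ρ (d + e) = redMap ρ d + redMap ρ e := by
  have hM : (fun j i => ρ ((d + e) (Pi.single i 1) j))
      = ((fun j i => ρ (d (Pi.single i 1) j)) + (fun j i => ρ (e (Pi.single i 1) j))
        : Matrix (Fin n) (Fin m) k) := by
    funext j i
    simp [map_add]
  refine LinearMap.ext fun v => ?_
  rw [redMap, hM]
  show Matrix.mulVec _ v = _
  erw [Matrix.add_mulVec]
  rfl

lemma redMap_zero_of_mem_ker {m n : ℕ} (d : (Fin m → S) →ₗ[S] (Fin n → S))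
    (hd : ∀ x i, d x i ∈ RingHom.ker ρ) : redMap ρ d = 0 := by
  have : (fun j i => ρ (d (Pi.single i 1) j)) = (0 : Matrix (Fin n) (Fin m) k) := by
    funext j i
    exact hd _ _
  rw [redMap, this, Matrix.mulVecLin_zero]

end Red

section Compare

variable {S k : Type} [Ring S] [Field k] {M : Type} [AddCommGroup M] [Module S M]

/-- The key abstract comparison: a minimal resolution `F` (ranks `r`) and a resolution `G`
(ranks `s`) minimal in degrees `≥ 1` of the same module have `r n = s n` for `n ≥ 2`,
and `r 0, r 1` differ from `s 0, s 1` by a common amount. -/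
lemma minimal_ranks_compare (ρ : S →+* k) (hρ : Function.Surjective ρ)
    (r s : ℕ → ℕ)
    (d : ∀ n, (Fin (r (n+1)) → S) →ₗ[S] (Fin (r n) → S))
    (e : (Fin (r 0) → S) →ₗ[S] M)
    (he : Function.Surjective e)
    (h0 : LinearMap.range (d 0) = LinearMap.ker e)
    (h : ∀ n, LinearMap.range (d (n+1)) = LinearMap.ker (d n))
    (hmin : ∀ n x i, d n x i ∈ RingHom.ker ρ)
    (dG : ∀ n, (Fin (s (n+1)) → S) →ₗ[S] (Fin (s n) → S))
    (eG : (Fin (s 0) → S) →ₗ[S] M)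
    (heG : Function.Surjective eG)
    (h0G : LinearMap.range (dG 0) = LinearMap.ker eG)
    (hG : ∀ n, LinearMap.range (dG (n+1)) = LinearMap.ker (dG n))
    (hminG : ∀ n x i, dG (n+1) x i ∈ RingHom.ker ρ) :
    ∃ rk : ℕ, (∀ n, 2 ≤ n → r n = s n) ∧ r 0 + rk = s 0 ∧ r 1 + rk = s 1 := by
  -- complexes compose to zero
  have hcz : ∀ {a b c : ℕ} (u : (Fin b → S) →ₗ[S] (Fin c → S))
      (v : (Fin a → S) →ₗ[S] (Fin b → S)), LinearMap.range v ≤ LinearMap.ker u →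
      u ∘ₗ v = 0 := by
    intro a b c u v hle
    refine LinearMap.ext fun x => ?_
    exact hle ⟨x, rfl⟩
  have hd0 : e ∘ₗ d 0 = 0 := by
    refine LinearMap.ext fun x => ?_
    have : d 0 x ∈ LinearMap.range (d 0) := ⟨x, rfl⟩
    rw [h0] at this; exact this
  have hdd : ∀ n, d n ∘ₗ d (n+1) = 0 := fun n => hcz _ _ (by rw [h n])
  have hdG0 : eG ∘ₗ dG 0 = 0 := by
    refine LinearMap.ext fun x => ?_
    have : dG 0 x ∈ LinearMap.range (dG 0) := ⟨x, rfl⟩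
    rw [h0G] at this; exact this
  have hddG : ∀ n, dG n ∘ₗ dG (n+1) = 0 := fun n => hcz _ _ (by rw [hG n])
  -- chain maps both ways
  obtain ⟨f, hf0, hf⟩ := exists_chainMap r s d e hd0 hdd dG eG heG h0G hG
  obtain ⟨g, hg0, hg⟩ := exists_chainMap s r dG eG hdG0 hddG d e he h0 h
  -- the composites are chain self-maps lifting the identity
  obtain ⟨t, ht0, ht⟩ := exists_homotopy r d e h0 h (fun n => g n ∘ₗ f n)
    (by rw [← LinearMap.comp_assoc, hg0, hf0])
    (fun n => by
      rw [← LinearMap.comp_assoc, hg n, LinearMap.comp_assoc, hf n, LinearMap.comp_assoc])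
  obtain ⟨u, hu0, hu⟩ := exists_homotopy s dG eG h0G hG (fun n => f n ∘ₗ g n)
    (by rw [← LinearMap.comp_assoc, hf0, hg0])
    (fun n => by
      rw [← LinearMap.comp_assoc, hf n, LinearMap.comp_assoc, hg n, LinearMap.comp_assoc])
  -- reductions
  let Fb : ∀ n, (Fin (r n) → k) →ₗ[k] (Fin (s n) → k) := fun n => redMap ρ (f n)
  let Gb : ∀ n, (Fin (s n) → k) →ₗ[k] (Fin (r n) → k) := fun n => redMap ρ (g n)
  let δ : (Fin (s 1) → k) →ₗ[k] (Fin (s 0) → k) := redMap ρ (dG 0)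
  let U0 : (Fin (s 0) → k) →ₗ[k] (Fin (s 1) → k) := redMap ρ (u 0)
  have hdred : ∀ n, redMap ρ (d n) = 0 := fun n => redMap_zero_of_mem_ker ρ _ (hmin n)
  have hdGred : ∀ n, redMap ρ (dG (n+1)) = 0 :=
    fun n => redMap_zero_of_mem_ker ρ _ (hminG n)
  have hredid : ∀ {m : ℕ}, redMap ρ (LinearMap.id : (Fin m → S) →ₗ[S] _) = LinearMap.id :=
    fun {m} => redMap_id ρ
  -- A1 : Gb n ∘ Fb n = id for all n
  have A1 : ∀ n, Gb n ∘ₗ Fb n = LinearMap.id := by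
    intro n
    have key : redMap ρ (g n ∘ₗ f n) = LinearMap.id := by
      cases n with
      | zero =>
        have hsum : g 0 ∘ₗ f 0 = d 0 ∘ₗ t 0 + LinearMap.id := by rw [ht0]; abel
        rw [hsum, redMap_add, redMap_comp ρ hρ, hdred 0, LinearMap.zero_comp, hredid, zero_add]
      | succ n =>
        have hsum : g (n+1) ∘ₗ f (n+1)
            = d (n+1) ∘ₗ t (n+1) + t n ∘ₗ d n + LinearMap.id := by rw [ht n]; abel
        rw [hsum, redMap_add, redMap_add, redMap_comp ρ hρ, redMap_comp ρ hρ, hdred (n+1),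
          hdred n, LinearMap.zero_comp, LinearMap.comp_zero, hredid, zero_add, zero_add]
    rw [← key, redMap_comp ρ hρ]
  have A2 : ∀ n, Fb (n+2) ∘ₗ Gb (n+2) = LinearMap.id := by
    intro n
    have key : redMap ρ (f (n+2) ∘ₗ g (n+2)) = LinearMap.id := by
      have hsum : f (n+2) ∘ₗ g (n+2)
          = dG (n+2) ∘ₗ u (n+2) + u (n+1) ∘ₗ dG (n+1) + LinearMap.id := by
        rw [hu (n+1)]; abel
      rw [hsum, redMap_add, redMap_add, redMap_comp ρ hρ, redMap_comp ρ hρ, hdGred (n+1),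
        hdGred n, LinearMap.zero_comp, LinearMap.comp_zero, hredid, zero_add, zero_add]
    rw [← key, redMap_comp ρ hρ]
  have A3 : Fb 1 ∘ₗ Gb 1 = LinearMap.id + U0 ∘ₗ δ := by
    have key : redMap ρ (f 1 ∘ₗ g 1) = LinearMap.id + U0 ∘ₗ δ := by
      have hsum : f 1 ∘ₗ g 1
          = dG 1 ∘ₗ u 1 + u 0 ∘ₗ dG 0 + LinearMap.id := by rw [hu 0]; abel
      rw [hsum, redMap_add, redMap_add, redMap_comp ρ hρ, redMap_comp ρ hρ, hdGred 0,
        LinearMap.zero_comp, hredid, zero_add]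
      abel
    rw [← key, redMap_comp ρ hρ]
  have A4 : Fb 0 ∘ₗ Gb 0 = LinearMap.id + δ ∘ₗ U0 := by
    have key : redMap ρ (f 0 ∘ₗ g 0) = LinearMap.id + δ ∘ₗ U0 := by
      have hsum : f 0 ∘ₗ g 0 = dG 0 ∘ₗ u 0 + LinearMap.id := by rw [hu0]; abel
      rw [hsum, redMap_add, redMap_comp ρ hρ, hredid]
      abel
    rw [← key, redMap_comp ρ hρ]
  have A5 : δ ∘ₗ Fb 1 = 0 := by
    have : redMap ρ (dG 0 ∘ₗ f 1) = redMap ρ (f 0 ∘ₗ d 0) := by rw [hf 0]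
    rw [redMap_comp ρ hρ, redMap_comp ρ hρ, hdred 0, LinearMap.comp_zero] at this
    exact this
  have A6 : Gb 0 ∘ₗ δ = 0 := by
    have : redMap ρ (d 0 ∘ₗ g 1) = redMap ρ (g 0 ∘ₗ dG 0) := by rw [hg 0]
    rw [redMap_comp ρ hρ, redMap_comp ρ hρ, hdred 0, LinearMap.zero_comp] at this
    exact this.symm
  -- now the dimension count
  refine ⟨Module.finrank k (LinearMap.range δ), ?_, ?_, ?_⟩
  · -- n ≥ 2
    intro n hn
    obtain ⟨m, rfl⟩ : ∃ m, n = m + 2 := ⟨n - 2, by omega⟩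
    have equiv : (Fin (r (m+2)) → k) ≃ₗ[k] (Fin (s (m+2)) → k) :=
      LinearEquiv.ofLinear (Fb (m+2)) (Gb (m+2)) (A2 m) (A1 (m+2))
    have := equiv.finrank_eq
    rwa [Module.finrank_fin_fun, Module.finrank_fin_fun] at this
  · -- r 0 + rk = s 0
    have hsurj : Function.Surjective (Gb 0) := by
      intro y
      exact ⟨Fb 0 y, LinearMap.congr_fun (A1 0) y⟩
    have hker : LinearMap.ker (Gb 0) = LinearMap.range δ := by
      apply le_antisymm
      · intro v hv
        have h1 := LinearMap.congr_fun A4 v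
        simp only [LinearMap.comp_apply, LinearMap.add_apply, LinearMap.id_apply] at h1
        rw [LinearMap.mem_ker.mp hv, map_zero] at h1
        refine ⟨-U0 v, ?_⟩
        rw [map_neg, neg_eq_iff_add_eq_zero, add_comm]
        exact h1.symm
      · rintro v ⟨w, rfl⟩
        exact LinearMap.congr_fun A6 w
    have hrn := LinearMap.finrank_range_add_finrank_ker (Gb 0)
    have e1 : Module.finrank k ↥(LinearMap.range (Gb 0)) = r 0 := by
      have h2 : LinearMap.range (Gb 0) = ⊤ := LinearMap.range_eq_top.mpr hsurj
      rw [h2, finrank_top, Module.finrank_fin_fun]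
    have e2 : Module.finrank k ↥(LinearMap.ker (Gb 0))
        = Module.finrank k ↥(LinearMap.range δ) := by rw [hker]
    rw [Module.finrank_fin_fun, e1, e2] at hrn
    omega
  · -- r 1 + rk = s 1
    have hrange : LinearMap.range (Fb 1) = LinearMap.ker δ := by
      apply le_antisymm
      · rintro v ⟨w, rfl⟩
        exact LinearMap.congr_fun A5 w
      · intro v hv
        have h1 := LinearMap.congr_fun A3 v
        simp only [LinearMap.comp_apply, LinearMap.add_apply, LinearMap.id_apply] at h1
        rw [LinearMap.mem_ker.mp hv, map_zero, add_zero] at h1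
        exact ⟨Gb 1 v, h1⟩
    have hinj : Function.Injective (Fb 1) := by
      have : Function.LeftInverse (Gb 1) (Fb 1) := fun v => LinearMap.congr_fun (A1 1) v
      exact this.injective
    have hrn1 := LinearMap.finrank_range_add_finrank_ker (Fb 1)
    have e1 : Module.finrank k ↥(LinearMap.ker (Fb 1)) = 0 := by
      have h2 : LinearMap.ker (Fb 1) = ⊥ := LinearMap.ker_eq_bot.mpr hinj
      rw [h2, finrank_bot]
    have e2 : Module.finrank k ↥(LinearMap.range (Fb 1))
        = Module.finrank k ↥(LinearMap.ker δ) := by rw [hrange]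
    rw [Module.finrank_fin_fun, e1, e2, add_zero] at hrn1
    have hrn2 := LinearMap.finrank_range_add_finrank_ker δ
    rw [Module.finrank_fin_fun] at hrn2
    omega

end Compare


section Split

variable {S : Type} [Ring S] {m n : ℕ}

/-- Combine two vectors into a vector on `Fin (m + n)`. -/
def fcmb : ((Fin m → S) × (Fin n → S)) →ₗ[S] (Fin (m + n) → S) where
  toFun uv := Fin.addCases uv.1 uv.2
  map_add' x y := by
    funext j
    induction j using Fin.addCases with
    | left i => simp [Fin.addCases_left]
    | right i => simp [Fin.addCases_right]
  map_smul' c x := by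
    funext j
    induction j using Fin.addCases with
    | left i => simp [Fin.addCases_left]
    | right i => simp [Fin.addCases_right]

def prj1 : (Fin (m + n) → S) →ₗ[S] (Fin m → S) := LinearMap.funLeft S S (Fin.castAdd n)

def prj2 : (Fin (m + n) → S) →ₗ[S] (Fin n → S) := LinearMap.funLeft S S (Fin.natAdd m)

@[simp] lemma fcmb_left (u : Fin m → S) (v : Fin n → S) (i : Fin m) :
    fcmb (u, v) (Fin.castAdd n i) = u i := by
  show Fin.addCases u v (Fin.castAdd n i) = u i
  exact Fin.addCases_left i

@[simp] lemma fcmb_right (u : Fin m → S) (v : Fin n → S) (i : Fin n) :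
    fcmb (u, v) (Fin.natAdd m i) = v i := by
  show Fin.addCases u v (Fin.natAdd m i) = v i
  exact Fin.addCases_right i

@[simp] lemma prj1_fcmb (u : Fin m → S) (v : Fin n → S) : prj1 (fcmb (u, v)) = u := by
  funext i; exact fcmb_left u v i

@[simp] lemma prj2_fcmb (u : Fin m → S) (v : Fin n → S) : prj2 (fcmb (u, v)) = v := by
  funext i; exact fcmb_right u v i

@[simp] lemma fcmb_prj (z : Fin (m + n) → S) : fcmb (prj1 z, prj2 z) = z := by
  funext j
  induction j using Fin.addCases with
  | left i => rw [fcmb_left]; rfl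
  | right i => rw [fcmb_right]; rfl

lemma fcmb_eq_zero_iff {u : Fin m → S} {v : Fin n → S} :
    fcmb (u, v) = 0 ↔ u = 0 ∧ v = 0 := by
  constructor
  · intro h
    constructor
    · rw [← prj1_fcmb u v, h, map_zero]
    · rw [← prj2_fcmb u v, h, map_zero]
  · rintro ⟨rfl, rfl⟩
    exact map_zero fcmb

lemma fcmb_mem {K : Ideal S} {u : Fin m → S} {v : Fin n → S}
    (hu : ∀ i, u i ∈ K) (hv : ∀ i, v i ∈ K) (j : Fin (m + n)) : fcmb (u, v) j ∈ K := by
  induction j using Fin.addCases with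
  | left i => rw [fcmb_left]; exact hu i
  | right i => rw [fcmb_right]; exact hv i

end Split


lemma pd_rank_eq' {Λ S : Type} [CommRing Λ] [IsDomain Λ] [Ring S] [iAlg : Algebra Λ S]
    {ι₀ : Type} [Fintype ι₀] [Nonempty ι₀] (bS : Module.Basis ι₀ Λ S)
    (P : Type) [AddCommGroup P] [Module S P] [iΛP : Module Λ P]
    [iT : IsScalarTower Λ S P]
    (htorP : Module.IsTorsion Λ P)
    (a b : ℕ) (g : (Fin a → S) →ₗ[S] (Fin b → S))
    (f : (Fin b → S) →ₗ[S] P)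
    (hg : Function.Injective g) (hf : Function.Surjective f)
    (hgf : LinearMap.range g = LinearMap.ker f) : a = b := by
  classical
  set n := Fintype.card ι₀ with hncard
  have hn : 0 < n := Fintype.card_pos
  let E : ∀ m : ℕ, (Fin m → S) ≃ₗ[Λ] (Fin (m * n) → Λ) := fun m =>
    (Pi.basis (fun _ : Fin m => bS)).reindex
      ((Equiv.sigmaEquivProd (Fin m) ι₀).trans
        (Fintype.equivFinOfCardEq (by simp [hncard]))) |>.equivFun
  have hab : a * n ≤ b * n := by
    apply le_of_fin_injective Λ (((E b).toLinearMap ∘ₗ (g.restrictScalars Λ))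
      ∘ₗ (E a).symm.toLinearMap)
    simp only [LinearMap.coe_comp, LinearEquiv.coe_coe, Function.comp_assoc]
    exact (E b).injective.comp (hg.comp (E a).symm.injective)
  have hcomm : ∀ (lc : Λ) (rr : S) (y : P), lc • rr • y = rr • lc • y := by
    intro lc rr y
    rw [← smul_assoc, Algebra.smul_def, Algebra.commutes, mul_smul, algebraMap_smul]
  choose lam hlam using fun i : Fin b => @htorP (f (Pi.single i 1))
  set c : Λ := ∏ i, (lam i : Λ) with hc
  have hcmem : c ∈ nonZeroDivisors Λ :=
    Submonoid.prod_mem _ (fun i _ => (lam i).2)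
  have hc0 : c ≠ 0 := nonZeroDivisors.ne_zero hcmem
  have hckill : ∀ i, c • f (Pi.single i 1) = 0 := by
    intro i
    have h1 : c = (∏ j ∈ Finset.univ.erase i, (lam j : Λ)) * (lam i : Λ) :=
      (Finset.prod_erase_mul _ _ (Finset.mem_univ i)).symm
    have h2 := hlam i
    rw [Submonoid.smul_def] at h2
    rw [h1, mul_smul, h2, smul_zero]
  have hall : ∀ x : Fin b → S, f ((algebraMap Λ S c) • x) = 0 := by
    intro x
    rw [map_smul, algebraMap_smul]
    have hx0 : x = ∑ i, x i • (Pi.single i (1 : S) : Fin b → S) := by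
      funext j
      rw [Finset.sum_apply]
      simp [Pi.single_apply, smul_eq_mul]
    rw [hx0, map_sum, Finset.smul_sum]
    refine Finset.sum_eq_zero fun i _ => ?_
    rw [map_smul, hcomm, hckill i, smul_zero]
  let mu : (Fin b → S) →ₗ[S] (Fin b → S) :=
    DistribMulAction.toLinearMap S (Fin b → S) c
  have hmu : ∀ x, mu x = c • x := fun x => rfl
  have hmurange : LinearMap.range mu ≤ LinearMap.range g := by
    rintro y ⟨x, rfl⟩
    rw [hgf, LinearMap.mem_ker, hmu, ← algebraMap_smul S c x]
    exact hall x
  obtain ⟨v, hv⟩ := lift_of_range_le mu g hmurange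
  have hmuinj : Function.Injective mu := by
    intro x y hxy
    rw [hmu, hmu] at hxy
    have h3 := congrArg (E b) hxy
    rw [map_smul, map_smul] at h3
    have h4 : E b x = E b y := by
      funext i
      have := congrFun h3 i
      simp only [Pi.smul_apply, smul_eq_mul] at this
      exact mul_left_cancel₀ hc0 this
    exact (E b).injective h4
  have hvinj : Function.Injective v := by
    have hgv : Function.Injective (g ∘ₗ v) := by rw [hv]; exact hmuinj
    intro x y hxy
    exact hgv (by simp [LinearMap.comp_apply, hxy])
  have hba : b * n ≤ a * n := by
    apply le_of_fin_injective Λ (((E a).toLinearMap ∘ₗ (v.restrictScalars Λ))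
      ∘ₗ (E b).symm.toLinearMap)
    simp only [LinearMap.coe_comp, LinearEquiv.coe_coe, Function.comp_assoc]
    exact (E a).injective.comp (hvinj.comp (E b).symm.injective)
  exact Nat.eq_of_mul_eq_mul_right hn (le_antisymm hab hba)

lemma glue_ranks {S k : Type} [Ring S] [Field k] (ρ : S →+* k)
    (hρ : Function.Surjective ρ)
    {M' M P : Type} [AddCommGroup M'] [Module S M'] [AddCommGroup M] [Module S M]
    [AddCommGroup P] [Module S P]
    (ι : M' →ₗ[S] M) (π : M →ₗ[S] P) (hι : Function.Injective ι)
    (hπ : Function.Surjective π) (hexact : LinearMap.range ι = LinearMap.ker π)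
    (r' r : ℕ → ℕ)
    (d' : ∀ n, (Fin (r' (n+1)) → S) →ₗ[S] (Fin (r' n) → S))
    (e' : (Fin (r' 0) → S) →ₗ[S] M')
    (he' : Function.Surjective e')
    (h0' : LinearMap.range (d' 0) = LinearMap.ker e')
    (h'n : ∀ n, LinearMap.range (d' (n+1)) = LinearMap.ker (d' n))
    (hmin' : ∀ n x i, d' n x i ∈ RingHom.ker ρ)
    (dM : ∀ n, (Fin (r (n+1)) → S) →ₗ[S] (Fin (r n) → S))
    (eM : (Fin (r 0) → S) →ₗ[S] M)
    (heM : Function.Surjective eM)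
    (h0M : LinearMap.range (dM 0) = LinearMap.ker eM)
    (hMn : ∀ n, LinearMap.range (dM (n+1)) = LinearMap.ker (dM n))
    (hminM : ∀ n x i, dM n x i ∈ RingHom.ker ρ)
    (a b : ℕ) (hab : a = b)
    (gP : (Fin a → S) →ₗ[S] (Fin b → S)) (fP : (Fin b → S) →ₗ[S] P)
    (hgPinj : Function.Injective gP) (hfPsurj : Function.Surjective fP)
    (hgfP : LinearMap.range gP = LinearMap.ker fP) :
    (∀ n, 2 ≤ n → r' n = r n) ∧
      (r' 1 : ℤ) - (r' 0 : ℤ) = (r 1 : ℤ) - (r 0 : ℤ) := by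
  classical
  obtain ⟨φ, hφ⟩ := lift_of_range_le fP π
    (by rw [LinearMap.range_eq_top.mpr hπ]; exact le_top)
  have hπφ : ∀ x, π (φ x) = fP x := fun x => LinearMap.congr_fun hφ x
  have hfPgP : ∀ y, fP (gP y) = 0 := fun y => by
    have : gP y ∈ LinearMap.ker fP := hgfP ▸ LinearMap.mem_range_self _ y
    exact this
  have hθrange : LinearMap.range (φ ∘ₗ gP) ≤ LinearMap.range (ι ∘ₗ e') := by
    have h1 : LinearMap.range (ι ∘ₗ e') = LinearMap.range ι := by
      rw [LinearMap.range_comp, LinearMap.range_eq_top.mpr he', Submodule.map_top]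
    rw [h1, hexact]
    rintro y ⟨x, rfl⟩
    show π ((φ ∘ₗ gP) x) = 0
    rw [LinearMap.comp_apply, hπφ, hfPgP]
  obtain ⟨θ, hθ⟩ := lift_of_range_le (φ ∘ₗ gP) (ι ∘ₗ e') hθrange
  have hθapp : ∀ y, ι (e' (θ y)) = φ (gP y) := fun y => LinearMap.congr_fun hθ y
  have hπι : ∀ m', π (ι m') = 0 := fun m' => by
    have : ι m' ∈ LinearMap.ker π := hexact ▸ LinearMap.mem_range_self ι m'
    exact this
  have he'd0 : ∀ x, e' (d' 0 x) = 0 := fun x => by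
    have : d' 0 x ∈ LinearMap.ker e' := h0' ▸ LinearMap.mem_range_self _ x
    exact this
  have hd'd : ∀ n x, d' n (d' (n+1) x) = 0 := fun n x => by
    have : d' (n+1) x ∈ LinearMap.ker (d' n) := h'n n ▸ LinearMap.mem_range_self _ x
    exact this
  -- the glued resolution of `M`
  let dG0 : (Fin (r' 1 + a) → S) →ₗ[S] (Fin (r' 0 + b) → S) :=
    fcmb ∘ₗ LinearMap.prod (d' 0 ∘ₗ prj1 - θ ∘ₗ prj2) (gP ∘ₗ prj2)
  let dG1 : (Fin (r' 2) → S) →ₗ[S] (Fin (r' 1 + a) → S) :=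
    fcmb ∘ₗ LinearMap.prod (d' 1) 0
  let eG : (Fin (r' 0 + b) → S) →ₗ[S] M :=
    (ι ∘ₗ e') ∘ₗ prj1 + φ ∘ₗ prj2
  have hdG0 : ∀ z, dG0 z = fcmb (d' 0 (prj1 z) - θ (prj2 z), gP (prj2 z)) := fun z => rfl
  have hdG1 : ∀ z, dG1 z = fcmb (d' 1 z, 0) := fun z => rfl
  have heGapp : ∀ z, eG z = ι (e' (prj1 z)) + φ (prj2 z) := fun z => rfl
  have heG : Function.Surjective eG := by
    intro m
    obtain ⟨xb, hxb⟩ := hfPsurj (π m)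
    have h4 : π (m - φ xb) = 0 := by rw [map_sub, hπφ, hxb, sub_self]
    have h5 : m - φ xb ∈ LinearMap.range ι := by rw [hexact]; exact h4
    obtain ⟨m', hm'⟩ := h5
    obtain ⟨w, hw⟩ := he' m'
    refine ⟨fcmb (w, xb), ?_⟩
    rw [heGapp, prj1_fcmb, prj2_fcmb, hw, hm']
    abel
  have h0G : LinearMap.range dG0 = LinearMap.ker eG := by
    apply le_antisymm
    · rintro y ⟨z, rfl⟩
      show eG (dG0 z) = 0
      rw [hdG0, heGapp, prj1_fcmb, prj2_fcmb, map_sub, map_sub, he'd0, hθapp, map_zero,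
        zero_sub]
      abel
    · intro z hz
      have hz' : ι (e' (prj1 z)) + φ (prj2 z) = 0 := hz
      have h6 : fP (prj2 z) = 0 := by
        have h7 : π (ι (e' (prj1 z)) + φ (prj2 z)) = 0 := by rw [hz', map_zero]
        rw [map_add, hπι, hπφ, zero_add] at h7
        exact h7
      have h8 : prj2 z ∈ LinearMap.range gP := by rw [hgfP]; exact h6
      obtain ⟨y, hy⟩ := h8
      have h9 : e' (prj1 z + θ y) = 0 := by
        apply hι
        rw [map_zero, map_add, map_add, hθapp, hy]
        exact hz'
      have h10 : prj1 z + θ y ∈ LinearMap.range (d' 0) := by rw [h0']; exact h9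
      obtain ⟨x, hx⟩ := h10
      refine ⟨fcmb (x, y), ?_⟩
      rw [hdG0, prj1_fcmb, prj2_fcmb, hx, hy]
      have h11 : prj1 z + θ y - θ y = prj1 z := by abel
      rw [h11, fcmb_prj]
  have hG1 : LinearMap.range dG1 = LinearMap.ker dG0 := by
    apply le_antisymm
    · rintro y ⟨w, rfl⟩
      show dG0 (dG1 w) = 0
      rw [hdG1, hdG0, prj1_fcmb, prj2_fcmb, hd'd 0 w, map_zero, map_zero, sub_zero]
      exact fcmb_eq_zero_iff.mpr ⟨rfl, rfl⟩
    · intro z hz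
      have h12 : dG0 z = 0 := hz
      rw [hdG0] at h12
      have h13 := fcmb_eq_zero_iff.mp h12
      have h14 : prj2 z = 0 := hgPinj (by rw [h13.2, map_zero])
      have h15 : d' 0 (prj1 z) = 0 := by
        have h15' := h13.1
        rw [h14, map_zero, sub_zero] at h15'
        exact h15'
      have h16 : prj1 z ∈ LinearMap.range (d' 1) := by rw [h'n 0]; exact h15
      obtain ⟨w, hw⟩ := h16
      refine ⟨w, ?_⟩
      rw [hdG1, hw, ← h14, fcmb_prj]
  have hG2 : LinearMap.range (d' 2) = LinearMap.ker dG1 := by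
    apply le_antisymm
    · rintro y ⟨w, rfl⟩
      show dG1 (d' 2 w) = 0
      rw [hdG1, hd'd 1 w]
      exact fcmb_eq_zero_iff.mpr ⟨rfl, rfl⟩
    · intro z hz
      have h17 : dG1 z = 0 := hz
      rw [hdG1] at h17
      have h18 := (fcmb_eq_zero_iff.mp h17).1
      rw [h'n 1]
      exact h18
  let s : ℕ → ℕ := fun n => match n with
    | 0 => r' 0 + b
    | 1 => r' 1 + a
    | (m+2) => r' (m+2)
  let dG : ∀ m, (Fin (s (m+1)) → S) →ₗ[S] (Fin (s m) → S) := fun m =>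
    match m with
    | 0 => dG0
    | 1 => dG1
    | (m+2) => d' (m+2)
  have hGn : ∀ m, LinearMap.range (dG (m+1)) = LinearMap.ker (dG m) := by
    intro m
    match m with
    | 0 => exact hG1
    | 1 => exact hG2
    | (m+2) => exact h'n (m+2)
  have hminG : ∀ m x i, dG (m+1) x i ∈ RingHom.ker ρ := by
    intro m
    match m with
    | 0 =>
      intro x i
      show dG1 x i ∈ _
      rw [hdG1]
      exact fcmb_mem (fun i2 => hmin' 1 x i2) (fun i2 => zero_mem _) i
    | (m+1) =>
      intro x i
      exact hmin' (m+2) x i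
  obtain ⟨rk, hge2, h0eq, h1eq⟩ := minimal_ranks_compare ρ hρ r s dM eM heM h0M hMn hminM
    dG eG heG h0G hGn hminG
  constructor
  · intro n hn
    obtain ⟨m, rfl⟩ : ∃ m, n = m + 2 := ⟨n - 2, by omega⟩
    have h19 := hge2 (m+2) (by omega)
    have hs : s (m+2) = r' (m+2) := rfl
    omega
  · have hs0 : s 0 = r' 0 + b := rfl
    have hs1 : s 1 = r' 1 + a := rfl
    omega

end Aux

/-- Let `0 → M' → M → P → 0` be a short exact sequence of finitely
generated `Λ`-torsion `R = Λ[G]`-modules, each of projective dimension at most `1` over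
`Λ`, with `P` of projective dimension at most `1` over `R`.  Then the ranks of minimal
free resolutions over `R` satisfy `r_n(M') = r_n(M)` for all `n ≥ 2` and
`r_1(M') - r_0(M') = r_1(M) - r_0(M)`. -/
theorem minimalResolution_eq_of_ses_pdLeOne_quotient
    (p : ℕ) [Fact p.Prime] (G : Type) [Group G] [Finite G] (hG : IsPGroup p G)
    (M' M P : Type) [AddCommGroup M'] [AddCommGroup M] [AddCommGroup P]
    [Module (Rg p G) M'] [Module (Rg p G) M] [Module (Rg p G) P]
    [Module (Lam p) M'] [IsScalarTower (Lam p) (Rg p G) M']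
    [Module (Lam p) M] [IsScalarTower (Lam p) (Rg p G) M]
    [Module (Lam p) P] [IsScalarTower (Lam p) (Rg p G) P]
    [Module.Finite (Rg p G) M'] [Module.Finite (Rg p G) M] [Module.Finite (Rg p G) P]
    (htorM' : Module.IsTorsion (Lam p) M') (htorM : Module.IsTorsion (Lam p) M)
    (htorP : Module.IsTorsion (Lam p) P)
    (hpdLM' : HasPdLeOne (Lam p) M') (hpdLM : HasPdLeOne (Lam p) M)
    (hpdLP : HasPdLeOne (Lam p) P)
    (hpdP : HasPdLeOne (Rg p G) P)
    (ι : M' →ₗ[Rg p G] M) (π : M →ₗ[Rg p G] P)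
    (hι : Function.Injective ι) (hπ : Function.Surjective π)
    (hexact : LinearMap.range ι = LinearMap.ker π)
    (r' r : ℕ → ℕ)
    (hres' : IsMinResRanks (Rg p G) (radR p G) M' r')
    (hres : IsMinResRanks (Rg p G) (radR p G) M r) :
    (∀ n, 2 ≤ n → r' n = r n) ∧
      (r' 1 : ℤ) - (r' 0 : ℤ) = (r 1 : ℤ) - (r 0 : ℤ) := by
  classical
  obtain ⟨dM, eM, heM, h0M, hMn, hminM⟩ := hres
  obtain ⟨d', e', he', h0', h'n, hmin'⟩ := hres'
  obtain ⟨a, b, gP, fP, hgPinj, hfPsurj, hgfP⟩ := hpdP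
  haveI := Fintype.ofFinite G
  have hab : a = b := pd_rank_eq' (Λ := Lam p) (S := Rg p G) (iAlg := MonoidAlgebra.algebra)
    (MonoidAlgebra.basis G (Lam p)) P htorP a b gP fP hgPinj hfPsurj hgfP
  exact glue_ranks (augRes p G) (ZMod.ringHom_surjective _) ι π hι hπ hexact r' r
    d' e' he' h0' h'n hmin' dM eM heM h0M hMn hminM a b hab gP fP hgPinj hfPsurj hgfP
end

section
/- Let p be a prime and let f ∈ ℤ_p[T] be either the constant p or a monic distinguished polynomial f = T^e + a_1 T^{e−1} + ⋯ + a_e (with a_1, …, a_e ∈ pℤ_p) that is irreducible over ℤ_p. Then the quotient ring ℤ_p[[T]]/(f) is a discrete valuation ring if and only if one of the following holds: (i) f = p; (ii) f = T − α with α ∈ pℤ_p; (iii) e ≥ 2, a_1, …, a_{e−1} ∈ pℤ_p, and a_e ∈ pℤ_p \ p²ℤ_p. -/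
set_option maxHeartbeats 1000000

open Polynomial PowerSeries

namespace Statement13Aux

variable {p : ℕ} [hp : Fact p.Prime]


/-! ### Basic facts about `ℤ_[p]` -/

lemma p_not_unit : ¬IsUnit (p : ℤ_[p]) := mem_nonunits_iff.mp PadicInt.p_nonunit

lemma not_p_dvd_one : ¬ (p : ℤ_[p]) ∣ 1 := fun h => p_not_unit (isUnit_of_dvd_one h)

lemma dvd_of_not_isUnit {x : ℤ_[p]} (h : ¬IsUnit x) : (p : ℤ_[p]) ∣ x :=
  (PadicInt.norm_lt_one_iff_dvd x).mp (PadicInt.not_isUnit_iff.mp h)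

lemma isUnit_of_not_dvd {x : ℤ_[p]} (h : ¬ (p : ℤ_[p]) ∣ x) : IsUnit x := by
  by_contra hc; exact h (dvd_of_not_isUnit hc)

lemma p_ne_zero : (p : ℤ_[p]) ≠ 0 := PadicInt.prime_p.ne_zero

lemma eq_zero_of_forall_pow_dvd (d : ℤ_[p]) (h : ∀ n : ℕ, (p : ℤ_[p]) ^ n ∣ d) : d = 0 := by
  by_contra hd
  have hpos : 0 < ‖d‖ := by simpa [norm_pos_iff] using hd
  obtain ⟨k, hk⟩ := PadicInt.exists_pow_neg_lt p hpos
  have : ‖d‖ ≤ (p : ℝ) ^ (-(k : ℤ)) :=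
    (PadicInt.norm_le_pow_iff_mem_span_pow d k).mpr (Ideal.mem_span_singleton.mpr (h k))
  linarith

/-! ### Basic facts about power series over `ℤ_[p]` -/

lemma coeff_one_mul (a b : PowerSeries ℤ_[p]) :
    PowerSeries.coeff 1 (a * b) =
      PowerSeries.constantCoeff a * PowerSeries.coeff 1 b
        + PowerSeries.coeff 1 a * PowerSeries.constantCoeff b := by
  rw [PowerSeries.coeff_mul, show Finset.HasAntidiagonal.antidiagonal (1:ℕ) = {(0,1),(1,0)} by decide,
    Finset.sum_pair (by decide)]
  simp [PowerSeries.coeff_zero_eq_constantCoeff]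

/-- coefficientwise divisibility gives divisibility by a constant -/
lemma exists_C_mul (a : ℤ_[p]) (g : PowerSeries ℤ_[p]) (h : ∀ n, a ∣ PowerSeries.coeff n g) :
    ∃ k : PowerSeries ℤ_[p], g = PowerSeries.C a * k := by
  refine ⟨PowerSeries.mk fun n => (h n).choose, ?_⟩
  ext n
  rw [PowerSeries.coeff_C_mul, PowerSeries.coeff_mk]
  exact (h n).choose_spec

/-- cancel a power series with nonzero constant coefficient, coefficientwise, below `n`. -/
lemma coeff_eq_zero_of_mul {F k : PowerSeries ℤ_[p]} (hF : PowerSeries.constantCoeff F ≠ 0)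
    {n : ℕ} (h : ∀ j < n, PowerSeries.coeff j (F * k) = 0) :
    ∀ j < n, PowerSeries.coeff j k = 0 := by
  intro j
  induction j using Nat.strong_induction_on with
  | _ j IH =>
  intro hj
  have hc := h j hj
  rw [PowerSeries.coeff_mul] at hc
  have hz : ∀ x ∈ Finset.HasAntidiagonal.antidiagonal j, x ≠ ((0 : ℕ), j) →
      PowerSeries.coeff x.1 F * PowerSeries.coeff x.2 k = 0 := by
    intro x hx hne
    have hsum : x.1 + x.2 = j := Finset.HasAntidiagonal.mem_antidiagonal.mp hx
    have hx2 : x.2 < j := by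
      rcases Nat.lt_or_ge x.2 j with h' | h'
      · exact h'
      · exfalso; apply hne
        have h2 : x.2 = j := by omega
        have h1 : x.1 = 0 := by omega
        exact Prod.ext h1 h2
    rw [IH x.2 hx2 (lt_trans hx2 hj), mul_zero]
  rw [Finset.sum_eq_single_of_mem ((0 : ℕ), j)
    (Finset.HasAntidiagonal.mem_antidiagonal.mpr (by simp)) hz] at hc
  rcases mul_eq_zero.mp hc with h' | h'
  · exact absurd (by simpa [PowerSeries.coeff_zero_eq_constantCoeff] using h') hF
  · exact h'

/-! ### The quotient ring -/

section Quot

variable (F : PowerSeries ℤ_[p])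

lemma localQ [Nontrivial (PowerSeries ℤ_[p] ⧸ Ideal.span {F})] : IsLocalRing (PowerSeries ℤ_[p] ⧸ Ideal.span {F}) :=
  IsLocalRing.of_surjective' (Ideal.Quotient.mk _) Ideal.Quotient.mk_surjective

lemma dvd_sub_of_mk_eq {x y : PowerSeries ℤ_[p]} (h : (Ideal.Quotient.mk (Ideal.span {F})) x = (Ideal.Quotient.mk (Ideal.span {F})) y) : F ∣ x - y :=
  Ideal.mem_span_singleton.mp (Ideal.Quotient.eq.mp h)

/-- images of series with `p ∣ constant coefficient` are non-units, provided
`p ∣ constantCoeff F`. -/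
lemma not_isUnit_mk (hF : (p : ℤ_[p]) ∣ PowerSeries.constantCoeff F) {g : PowerSeries ℤ_[p]}
    (hg : (p : ℤ_[p]) ∣ PowerSeries.constantCoeff g) : ¬IsUnit ((Ideal.Quotient.mk (Ideal.span {F})) g) := by
  intro hu
  obtain ⟨v, hv⟩ := isUnit_iff_exists_inv.mp hu
  obtain ⟨y, rfl⟩ := Ideal.Quotient.mk_surjective v
  rw [← map_mul, ← map_one (Ideal.Quotient.mk (Ideal.span {F}))] at hv
  obtain ⟨z, hz⟩ := dvd_sub_of_mk_eq F hv
  have h0 := congrArg (PowerSeries.constantCoeff) hz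
  simp only [map_sub, map_mul, map_one] at h0
  apply not_p_dvd_one (p := p)
  have : (1 : ℤ_[p]) = PowerSeries.constantCoeff g * PowerSeries.constantCoeff y
      - PowerSeries.constantCoeff F * PowerSeries.constantCoeff z := by
    linear_combination -h0
  rw [this]
  exact dvd_sub (hg.mul_right _) (hF.mul_right _)

lemma dvd_constantCoeff_of_mem [IsLocalRing (PowerSeries ℤ_[p] ⧸ Ideal.span {F})] {g : PowerSeries ℤ_[p]}
    (h : (Ideal.Quotient.mk (Ideal.span {F})) g ∈ IsLocalRing.maximalIdeal (PowerSeries ℤ_[p] ⧸ Ideal.span {F})) :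
    (p : ℤ_[p]) ∣ PowerSeries.constantCoeff g := by
  by_contra hc
  have hgu : IsUnit g := PowerSeries.isUnit_iff_constantCoeff.mpr (isUnit_of_not_dvd hc)
  exact (mem_nonunits_iff.mp ((IsLocalRing.mem_maximalIdeal _).mp h)) (hgu.map _)

lemma maximalIdeal_eq (hF : (p : ℤ_[p]) ∣ PowerSeries.constantCoeff F) [IsLocalRing (PowerSeries ℤ_[p] ⧸ Ideal.span {F})] :
    IsLocalRing.maximalIdeal (PowerSeries ℤ_[p] ⧸ Ideal.span {F}) =
      Ideal.span {(Ideal.Quotient.mk (Ideal.span {F})) (PowerSeries.C (p : ℤ_[p])), (Ideal.Quotient.mk (Ideal.span {F})) PowerSeries.X} := by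
  apply le_antisymm
  · intro x hx
    obtain ⟨g, rfl⟩ := Ideal.Quotient.mk_surjective x
    obtain ⟨c, hc⟩ := dvd_constantCoeff_of_mem F hx
    have hdecomp : g = PowerSeries.C (p : ℤ_[p]) * PowerSeries.C c
        + PowerSeries.X * (PowerSeries.mk fun n => PowerSeries.coeff (n + 1) g) := by
      have hs := PowerSeries.sub_const_eq_X_mul_shift g
      rw [← map_mul, ← hc]
      linear_combination hs
    rw [hdecomp, map_add, map_mul, map_mul]
    exact Ideal.mem_span_pair.mpr ⟨(Ideal.Quotient.mk (Ideal.span {F})) (PowerSeries.C c),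
      (Ideal.Quotient.mk (Ideal.span {F})) (PowerSeries.mk fun n => PowerSeries.coeff (n + 1) g), by ring⟩
  · rw [Ideal.span_le]
    rintro y hy
    rcases Set.mem_insert_iff.mp hy with rfl | hy
    · exact (IsLocalRing.mem_maximalIdeal _).mpr (mem_nonunits_iff.mpr
        (not_isUnit_mk F hF (by simp)))
    · rw [Set.mem_singleton_iff.mp hy]
      exact (IsLocalRing.mem_maximalIdeal _).mpr (mem_nonunits_iff.mpr
        (not_isUnit_mk F hF (by simp)))

lemma exists_decomp {g : PowerSeries ℤ_[p]} (n : ℕ)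
    (h : (Ideal.Quotient.mk (Ideal.span {F})) g ∈ Ideal.span {((Ideal.Quotient.mk (Ideal.span {F})) PowerSeries.X) ^ n}) :
    ∃ z y : PowerSeries ℤ_[p], g = F * z + PowerSeries.X ^ n * y := by
  rw [← map_pow, Ideal.mem_span_singleton] at h
  obtain ⟨y', hy'⟩ := h
  obtain ⟨y, rfl⟩ := Ideal.Quotient.mk_surjective y'
  rw [← map_mul] at hy'
  obtain ⟨z, hz⟩ := dvd_sub_of_mk_eq F hy'
  exact ⟨z, y, by linear_combination hz⟩

end Quot

/-! ### The abstract DVR criterion -/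

theorem aux_dvr {Q : Type*} [CommRing Q] [IsDomain Q] [IsLocalRing Q] (v : Q) (hv0 : v ≠ 0)
    (hm : IsLocalRing.maximalIdeal Q = Ideal.span {v})
    (hint : ∀ x : Q, (∀ n : ℕ, x ∈ Ideal.span {v ^ n}) → x = 0) :
    IsDiscreteValuationRing Q := by
  have hnon : ∀ x : Q, ¬IsUnit x → v ∣ x := by
    intro x hx
    exact Ideal.mem_span_singleton.mp
      (hm ▸ (IsLocalRing.mem_maximalIdeal x).mpr (mem_nonunits_iff.mpr hx))
  have hvu : ¬IsUnit v := by
    intro h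
    have hmem : v ∈ IsLocalRing.maximalIdeal Q := hm ▸ Ideal.mem_span_singleton_self v
    exact (IsLocalRing.maximalIdeal.isMaximal Q).ne_top
      (Ideal.eq_top_of_isUnit_mem _ hmem h)
  have hirr : Irreducible v := by
    refine ⟨hvu, fun a b hab => ?_⟩
    by_contra hcon
    push_neg at hcon
    obtain ⟨ha, hb⟩ := hcon
    obtain ⟨c, hc⟩ := hnon a ha
    have heq : v * 1 = v * (c * b) := by
      calc v * 1 = a * b := by rw [mul_one, hab]
      _ = v * c * b := by rw [hc]
      _ = v * (c * b) := by ring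
    have h1 : (1 : Q) = c * b := mul_left_cancel₀ hv0 heq
    exact hb (IsUnit.of_mul_eq_one c (by rw [mul_comm, ← h1]))
  apply IsDiscreteValuationRing.ofHasUnitMulPowIrreducibleFactorization
  refine ⟨v, hirr, ?_⟩
  intro x hx
  have hex : ∃ n : ℕ, x ∉ Ideal.span {v ^ n} := by
    by_contra hcon; push_neg at hcon; exact hx (hint x hcon)
  classical
  have hN : x ∉ Ideal.span {v ^ Nat.find hex} := Nat.find_spec hex
  have hN0 : Nat.find hex ≠ 0 := by
    intro h0
    apply hN
    rw [h0, pow_zero, Ideal.span_singleton_one]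
    exact Submodule.mem_top
  obtain ⟨m, hm'⟩ := Nat.exists_eq_succ_of_ne_zero hN0
  have hmem : x ∈ Ideal.span {v ^ m} :=
    not_not.mp (Nat.find_min hex (by omega))
  obtain ⟨u, hu⟩ := Ideal.mem_span_singleton.mp hmem
  have huu : IsUnit u := by
    by_contra hc
    obtain ⟨w, hw⟩ := hnon u hc
    apply hN
    rw [hm']
    exact Ideal.mem_span_singleton.mpr ⟨w, by rw [hu, hw, pow_succ]; ring⟩
  obtain ⟨uu, huu'⟩ := huu
  exact ⟨m, ⟨uu, by rw [huu', ← hu]⟩⟩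

/-! ### Evaluation of power series at an element of `pℤ_p` -/

section Ev

variable (α : ℤ_[p])

/-- The tail sums `∑ i, g_{j+i} α^i`. -/
noncomputable def S (g : PowerSeries ℤ_[p]) (j : ℕ) : ℤ_[p] :=
  ∑' i : ℕ, PowerSeries.coeff (j + i) g * α ^ i

variable {α}

lemma summable_S (hα : (p : ℤ_[p]) ∣ α) (g : PowerSeries ℤ_[p]) (j : ℕ) :
    Summable (fun i : ℕ => PowerSeries.coeff (j + i) g * α ^ i) := by
  have hnorm : ‖α‖ ≤ (p : ℝ)⁻¹ := by
    have h1 := (PadicInt.norm_le_pow_iff_mem_span_pow α 1).mpr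
      (by rw [pow_one]; exact Ideal.mem_span_singleton.mpr hα)
    simpa using h1
  have hp1 : (0:ℝ) ≤ (p : ℝ)⁻¹ := by positivity
  refine Summable.of_norm_bounded (g := fun i => ((p : ℝ)⁻¹) ^ i)
    (summable_geometric_of_lt_one hp1 ?_) ?_
  swap
  · intro i
    calc ‖PowerSeries.coeff (j + i) g * α ^ i‖
        = ‖PowerSeries.coeff (j + i) g‖ * ‖α ^ i‖ := norm_mul _ _
      _ ≤ 1 * ‖α‖ ^ i := by
          rw [norm_pow]
          exact mul_le_mul_of_nonneg_right (PadicInt.norm_le_one _)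
            (pow_nonneg (norm_nonneg _) i)
      _ = ‖α‖ ^ i := one_mul _
      _ ≤ ((p : ℝ)⁻¹) ^ i := pow_le_pow_left₀ (norm_nonneg _) hnorm i
  · have h1 : (1:ℝ) < (p:ℝ) := by
      exact_mod_cast hp.out.one_lt
    rw [inv_lt_one_iff₀]
    right; exact h1

lemma S_shift (hα : (p : ℤ_[p]) ∣ α) (g : PowerSeries ℤ_[p]) (j : ℕ) :
    S α g j = PowerSeries.coeff j g + α * S α g (j + 1) := by
  have hs := summable_S hα g j
  rw [S, Summable.tsum_eq_zero_add hs]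
  congr 1
  · simp
  · rw [S, ← Summable.tsum_mul_left α (summable_S hα g (j+1))]
    apply tsum_congr
    intro i
    rw [show j + (i + 1) = j + 1 + i by ring, pow_succ]
    ring

/-- Every power series is congruent to a constant modulo `X - C α`. -/
lemma exists_const_rep (hα : (p : ℤ_[p]) ∣ α) (g : PowerSeries ℤ_[p]) :
    ∃ c : ℤ_[p], (PowerSeries.X - PowerSeries.C α) ∣ (g - PowerSeries.C c) := by
  refine ⟨S α g 0, PowerSeries.mk fun j => S α g (j + 1), ?_⟩
  ext n
  cases n with
  | zero =>
    simp only [PowerSeries.coeff_zero_eq_constantCoeff, map_sub, map_mul,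
      PowerSeries.constantCoeff_X, PowerSeries.constantCoeff_C, zero_mul]
    have h0 := S_shift hα g 0
    rw [PowerSeries.coeff_zero_eq_constantCoeff] at h0
    simp only [PowerSeries.constantCoeff_mk]
    linear_combination -h0
  | succ n =>
    rw [map_sub, PowerSeries.coeff_C, if_neg (Nat.succ_ne_zero n), sub_zero, sub_mul,
      map_sub, PowerSeries.coeff_succ_X_mul, PowerSeries.coeff_C_mul,
      PowerSeries.coeff_mk, PowerSeries.coeff_mk]
    have h1 := S_shift hα g (n + 1)
    linear_combination -h1

/-- If a constant is divisible by `X - C α` with `α ∈ (p)`, it is zero. -/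
lemma const_eq_zero_of_dvd (hα : (p : ℤ_[p]) ∣ α) {d : ℤ_[p]}
    (h : (PowerSeries.X - PowerSeries.C α) ∣ (PowerSeries.C d : PowerSeries ℤ_[p])) :
    d = 0 := by
  obtain ⟨k, hk⟩ := h
  have hrec : ∀ j : ℕ, PowerSeries.coeff j k = α * PowerSeries.coeff (j + 1) k := by
    intro j
    have hc := congrArg (PowerSeries.coeff (j + 1)) hk
    rw [PowerSeries.coeff_C, if_neg (Nat.succ_ne_zero j), sub_mul, map_sub,
      PowerSeries.coeff_succ_X_mul, PowerSeries.coeff_C_mul] at hc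
    linear_combination -hc
  have hpow : ∀ n : ℕ, PowerSeries.coeff 0 k = α ^ n * PowerSeries.coeff n k := by
    intro n
    induction n with
    | zero => simp
    | succ n ih =>
      rw [ih, hrec n, pow_succ]
      ring
  have hd : d = -α * PowerSeries.coeff 0 k := by
    have hc := congrArg (PowerSeries.coeff 0) hk
    rw [PowerSeries.coeff_C, if_pos rfl, sub_mul, map_sub,
      PowerSeries.coeff_zero_X_mul, PowerSeries.coeff_C_mul] at hc
    linear_combination hc
  apply eq_zero_of_forall_pow_dvd
  intro n
  have : d = -(α ^ (n + 1)) * PowerSeries.coeff n k := by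
    rw [hd, hpow n, pow_succ]
    ring
  rw [this]
  exact (pow_dvd_pow_of_dvd hα n).trans
    (Dvd.dvd.mul_right (dvd_neg.mpr (pow_dvd_pow α (Nat.le_succ n))) _)

end Ev

/-! ### The three DVR cases -/

theorem dvr_case_i (F : PowerSeries ℤ_[p]) (hFeq : F = PowerSeries.C (p : ℤ_[p]))
    [IsDomain (PowerSeries ℤ_[p] ⧸ Ideal.span {F})] :
    IsDiscreteValuationRing (PowerSeries ℤ_[p] ⧸ Ideal.span {F}) := by
  letI : IsLocalRing (PowerSeries ℤ_[p] ⧸ Ideal.span {F}) := localQ F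
  have hF : (p : ℤ_[p]) ∣ PowerSeries.constantCoeff F := by
    rw [hFeq]; simp
  have hmax := maximalIdeal_eq F hF
  have h0 : (Ideal.Quotient.mk (Ideal.span {F})) (PowerSeries.C (p : ℤ_[p])) = 0 := by
    rw [Ideal.Quotient.eq_zero_iff_mem, ← hFeq]
    exact Ideal.mem_span_singleton_self F
  rw [h0] at hmax
  have hspan : Ideal.span ({0, (Ideal.Quotient.mk (Ideal.span {F})) PowerSeries.X} :
      Set (PowerSeries ℤ_[p] ⧸ Ideal.span {F})) =
      Ideal.span {(Ideal.Quotient.mk (Ideal.span {F})) PowerSeries.X} := by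
    rw [Ideal.span_insert, Ideal.span_singleton_eq_bot.mpr rfl, bot_sup_eq]
  rw [hspan] at hmax
  have hXne : (Ideal.Quotient.mk (Ideal.span {F})) PowerSeries.X ≠ 0 := by
    intro h
    have hmem := Ideal.Quotient.eq_zero_iff_mem.mp h
    rw [hFeq, Ideal.mem_span_singleton] at hmem
    obtain ⟨k, hk⟩ := hmem
    have hc := congrArg (PowerSeries.coeff 1) hk
    rw [PowerSeries.coeff_one_X, PowerSeries.coeff_C_mul] at hc
    exact not_p_dvd_one ⟨PowerSeries.coeff 1 k, hc⟩
  refine aux_dvr _ hXne hmax ?_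
  intro x hx
  obtain ⟨g, rfl⟩ := Ideal.Quotient.mk_surjective x
  have hcoeff : ∀ j, (p : ℤ_[p]) ∣ PowerSeries.coeff j g := by
    intro j
    obtain ⟨z, y, hzy⟩ := exists_decomp F (j + 1) (hx (j + 1))
    have hc := congrArg (PowerSeries.coeff j) hzy
    have hzero : PowerSeries.coeff j (PowerSeries.X ^ (j + 1) * y) = 0 :=
      PowerSeries.X_pow_dvd_iff.mp (dvd_mul_right _ _) j (Nat.lt_succ_self j)
    rw [map_add, hzero, add_zero, hFeq, PowerSeries.coeff_C_mul] at hc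
    exact ⟨PowerSeries.coeff j z, hc⟩
  obtain ⟨k, hk⟩ := exists_C_mul (p : ℤ_[p]) g hcoeff
  rw [hk, map_mul, h0, zero_mul]

theorem dvr_case_ii (F : PowerSeries ℤ_[p]) (α : ℤ_[p]) (hα : (p : ℤ_[p]) ∣ α)
    (hFeq : F = PowerSeries.X - PowerSeries.C α)
    [IsDomain (PowerSeries ℤ_[p] ⧸ Ideal.span {F})] :
    IsDiscreteValuationRing (PowerSeries ℤ_[p] ⧸ Ideal.span {F}) := by
  letI : IsLocalRing (PowerSeries ℤ_[p] ⧸ Ideal.span {F}) := localQ F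
  have hF : (p : ℤ_[p]) ∣ PowerSeries.constantCoeff F := by
    rw [hFeq, map_sub]
    simpa using dvd_neg.mpr hα
  have hmax := maximalIdeal_eq F hF
  have hXα : (Ideal.Quotient.mk (Ideal.span {F})) PowerSeries.X =
      (Ideal.Quotient.mk (Ideal.span {F})) (PowerSeries.C α) := by
    rw [Ideal.Quotient.eq, ← hFeq]
    exact Ideal.mem_span_singleton_self F
  obtain ⟨c, hc⟩ := id hα
  have hXmem : (Ideal.Quotient.mk (Ideal.span {F})) PowerSeries.X ∈
      Ideal.span {(Ideal.Quotient.mk (Ideal.span {F})) (PowerSeries.C (p : ℤ_[p]))} := by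
    apply Ideal.mem_span_singleton.mpr
    refine ⟨(Ideal.Quotient.mk (Ideal.span {F})) (PowerSeries.C c), ?_⟩
    rw [hXα, hc, map_mul, map_mul]
  have hmax' : IsLocalRing.maximalIdeal (PowerSeries ℤ_[p] ⧸ Ideal.span {F}) =
      Ideal.span {(Ideal.Quotient.mk (Ideal.span {F})) (PowerSeries.C (p : ℤ_[p]))} := by
    rw [hmax, Set.pair_comm]
    exact Submodule.span_insert_eq_span hXmem
  have hCpne : (Ideal.Quotient.mk (Ideal.span {F})) (PowerSeries.C (p : ℤ_[p])) ≠ 0 := by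
    intro h
    have hmem := Ideal.Quotient.eq_zero_iff_mem.mp h
    rw [Ideal.mem_span_singleton, hFeq] at hmem
    exact p_ne_zero (const_eq_zero_of_dvd hα hmem)
  refine aux_dvr _ hCpne hmax' ?_
  intro x hx
  obtain ⟨g, rfl⟩ := Ideal.Quotient.mk_surjective x
  obtain ⟨c₀, hc₀⟩ := exists_const_rep hα g
  rw [← hFeq] at hc₀
  have hg : (Ideal.Quotient.mk (Ideal.span {F})) g =
      (Ideal.Quotient.mk (Ideal.span {F})) (PowerSeries.C c₀) :=
    Ideal.Quotient.eq.mpr (Ideal.mem_span_singleton.mpr hc₀)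
  suffices hczero : c₀ = 0 by
    rw [hg, hczero, map_zero, map_zero]
  apply eq_zero_of_forall_pow_dvd
  intro n
  have hxn := hx n
  rw [hg, ← map_pow, ← map_pow, Ideal.mem_span_singleton] at hxn
  obtain ⟨y', hy'⟩ := hxn
  obtain ⟨y, rfl⟩ := Ideal.Quotient.mk_surjective y'
  rw [← map_mul] at hy'
  have hdvd := dvd_sub_of_mk_eq F hy'
  obtain ⟨cₙ, hcₙ⟩ := exists_const_rep hα y
  rw [← hFeq] at hcₙ
  have hkey : F ∣ (PowerSeries.C (c₀ - (p : ℤ_[p]) ^ n * cₙ)) := by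
    have h3 : (PowerSeries.C (c₀ - (p : ℤ_[p]) ^ n * cₙ)) =
        (PowerSeries.C c₀ - PowerSeries.C ((p : ℤ_[p]) ^ n) * y)
          + PowerSeries.C ((p : ℤ_[p]) ^ n) * (y - PowerSeries.C cₙ) := by
      rw [map_sub, map_mul]
      ring
    rw [h3]
    exact dvd_add hdvd (hcₙ.mul_left _)
  rw [hFeq] at hkey
  have hzero := const_eq_zero_of_dvd hα hkey
  exact ⟨cₙ, by linear_combination hzero⟩

theorem dvr_case_iii (f : Polynomial ℤ_[p]) (h0 : (p : ℤ_[p]) ∣ f.coeff 0)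
    (h0' : ¬ (p : ℤ_[p]) ^ 2 ∣ f.coeff 0)
    [IsDomain (PowerSeries ℤ_[p] ⧸ Ideal.span {(f : PowerSeries ℤ_[p])})] :
    IsDiscreteValuationRing (PowerSeries ℤ_[p] ⧸ Ideal.span {(f : PowerSeries ℤ_[p])}) := by
  letI : IsLocalRing (PowerSeries ℤ_[p] ⧸ Ideal.span {(f : PowerSeries ℤ_[p])}) :=
    localQ (f : PowerSeries ℤ_[p])
  have hcc : PowerSeries.constantCoeff (f : PowerSeries ℤ_[p]) = f.coeff 0 :=
    Polynomial.constantCoeff_coe f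
  have hF : (p : ℤ_[p]) ∣ PowerSeries.constantCoeff (f : PowerSeries ℤ_[p]) := by
    rw [hcc]; exact h0
  have hcc0 : PowerSeries.constantCoeff (f : PowerSeries ℤ_[p]) ≠ 0 := by
    rw [hcc]
    intro h
    exact h0' (h ▸ dvd_zero _)
  obtain ⟨u, hu⟩ := h0
  have huu : IsUnit u := by
    by_contra hcu
    obtain ⟨w, hw⟩ := dvd_of_not_isUnit hcu
    exact h0' ⟨w, by rw [hu, hw, pow_two]; ring⟩
  have hmax := maximalIdeal_eq (f : PowerSeries ℤ_[p]) hF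
  -- the constant coefficient, hence `C p`, is a multiple of `X` in the quotient
  have hdiv : ((Polynomial.C (f.coeff 0) : Polynomial ℤ_[p]) : PowerSeries ℤ_[p]) =
      (f : PowerSeries ℤ_[p]) - ((Polynomial.X * f.divX : Polynomial ℤ_[p]) : PowerSeries ℤ_[p]) := by
    rw [← Polynomial.coe_sub]
    norm_cast
    linear_combination Polynomial.X_mul_divX_add f
  have hCamem : (Ideal.Quotient.mk (Ideal.span {(f : PowerSeries ℤ_[p])}))
      (PowerSeries.C (f.coeff 0)) ∈
      Ideal.span {(Ideal.Quotient.mk (Ideal.span {(f : PowerSeries ℤ_[p])})) PowerSeries.X} := by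
    apply Ideal.mem_span_singleton.mpr
    refine ⟨(Ideal.Quotient.mk (Ideal.span {(f : PowerSeries ℤ_[p])})) (-(f.divX : PowerSeries ℤ_[p])), ?_⟩
    rw [← map_mul]
    apply Ideal.Quotient.eq.mpr
    rw [← Polynomial.coe_C]
    have : (PowerSeries.X : PowerSeries ℤ_[p]) * -(f.divX : PowerSeries ℤ_[p]) =
        -((Polynomial.X * f.divX : Polynomial ℤ_[p]) : PowerSeries ℤ_[p]) := by
      rw [Polynomial.coe_mul, Polynomial.coe_X]
      ring
    rw [this, hdiv]
    have : (f : PowerSeries ℤ_[p]) - ((Polynomial.X * f.divX : Polynomial ℤ_[p]) : PowerSeries ℤ_[p])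
        - -((Polynomial.X * f.divX : Polynomial ℤ_[p]) : PowerSeries ℤ_[p]) = (f : PowerSeries ℤ_[p]) := by
      ring
    rw [this]
    exact Ideal.mem_span_singleton_self _
  have hCpmem : (Ideal.Quotient.mk (Ideal.span {(f : PowerSeries ℤ_[p])}))
      (PowerSeries.C (p : ℤ_[p])) ∈
      Ideal.span {(Ideal.Quotient.mk (Ideal.span {(f : PowerSeries ℤ_[p])})) PowerSeries.X} := by
    obtain ⟨v, hv⟩ := huu
    have hpu : (PowerSeries.C (p : ℤ_[p])) =
        PowerSeries.C (f.coeff 0) * PowerSeries.C (((v⁻¹ : ℤ_[p]ˣ)) : ℤ_[p]) := by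
      rw [← map_mul]
      congr 1
      rw [hu, ← hv]
      rw [mul_assoc, ← Units.val_mul, mul_inv_cancel, Units.val_one, mul_one]
    rw [hpu, map_mul]
    exact Ideal.mul_mem_right _ _ hCamem
  have hmax' : IsLocalRing.maximalIdeal (PowerSeries ℤ_[p] ⧸ Ideal.span {(f : PowerSeries ℤ_[p])}) =
      Ideal.span {(Ideal.Quotient.mk (Ideal.span {(f : PowerSeries ℤ_[p])})) PowerSeries.X} := by
    rw [hmax]
    exact Submodule.span_insert_eq_span hCpmem
  have hXne : (Ideal.Quotient.mk (Ideal.span {(f : PowerSeries ℤ_[p])})) PowerSeries.X ≠ 0 := by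
    intro h
    have hmem := Ideal.Quotient.eq_zero_iff_mem.mp h
    rw [Ideal.mem_span_singleton] at hmem
    obtain ⟨k, hk⟩ := hmem
    have hc0 := congrArg (PowerSeries.constantCoeff) hk
    rw [map_mul, PowerSeries.constantCoeff_X, hcc] at hc0
    have hk0 : PowerSeries.constantCoeff k = 0 := by
      rcases mul_eq_zero.mp hc0.symm with h' | h'
      · exact absurd h' (by rwa [hcc] at hcc0)
      · exact h'
    have hc1 := congrArg (PowerSeries.coeff 1) hk
    rw [PowerSeries.coeff_one_X, coeff_one_mul, hk0, mul_zero, add_zero, hcc] at hc1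
    have : (p : ℤ_[p]) ∣ 1 := by
      rw [hc1]
      exact (Dvd.intro u hu.symm).mul_right _
    exact not_p_dvd_one this
  refine aux_dvr _ hXne hmax' ?_
  intro x hx
  obtain ⟨g, rfl⟩ := Ideal.Quotient.mk_surjective x
  classical
  have hdec : ∀ n : ℕ, ∃ z y : PowerSeries ℤ_[p],
      g = (f : PowerSeries ℤ_[p]) * z + PowerSeries.X ^ n * y :=
    fun n => exists_decomp (f : PowerSeries ℤ_[p]) n (hx n)
  let Z : ℕ → PowerSeries ℤ_[p] := fun n => (hdec n).choose
  have hZ : ∀ n, ∃ y, g = (f : PowerSeries ℤ_[p]) * Z n + PowerSeries.X ^ n * y :=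
    fun n => (hdec n).choose_spec
  have hstab : ∀ m n j : ℕ, j < m → j < n →
      PowerSeries.coeff j (Z m) = PowerSeries.coeff j (Z n) := by
    intro m n j hjm hjn
    obtain ⟨ym, hym⟩ := hZ m
    obtain ⟨yn, hyn⟩ := hZ n
    have hFZ : (f : PowerSeries ℤ_[p]) * (Z m - Z n) =
        PowerSeries.X ^ n * yn - PowerSeries.X ^ m * ym := by
      linear_combination hyn - hym
    have hvan : ∀ i < min m n, PowerSeries.coeff i ((f : PowerSeries ℤ_[p]) * (Z m - Z n)) = 0 := by
      intro i hi
      rw [hFZ, map_sub,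
        PowerSeries.X_pow_dvd_iff.mp (dvd_mul_right _ yn) i (lt_of_lt_of_le hi (min_le_right m n)),
        PowerSeries.X_pow_dvd_iff.mp (dvd_mul_right _ ym) i (lt_of_lt_of_le hi (min_le_left m n)),
        sub_zero]
    have := coeff_eq_zero_of_mul hcc0 hvan j (lt_min hjm hjn)
    rw [map_sub, sub_eq_zero] at this
    exact this
  set h : PowerSeries ℤ_[p] := PowerSeries.mk fun j => PowerSeries.coeff j (Z (j + 1)) with hh
  have hgFh : g = (f : PowerSeries ℤ_[p]) * h := by
    ext j
    obtain ⟨y, hy⟩ := hZ (j + 1)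
    have h1 : PowerSeries.coeff j g =
        PowerSeries.coeff j ((f : PowerSeries ℤ_[p]) * Z (j + 1)) := by
      rw [hy, map_add,
        PowerSeries.X_pow_dvd_iff.mp (dvd_mul_right _ y) j (Nat.lt_succ_self j), add_zero]
    rw [h1, PowerSeries.coeff_mul, PowerSeries.coeff_mul]
    apply Finset.sum_congr rfl
    intro ij hij
    have hij2 : ij.2 ≤ j := by
      have := Finset.HasAntidiagonal.mem_antidiagonal.mp hij
      omega
    congr 1
    rw [hh, PowerSeries.coeff_mk]
    exact (hstab (ij.2 + 1) (j + 1) ij.2 (Nat.lt_succ_self _) (Nat.lt_succ_of_le hij2)).symm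
  rw [hgFh, map_mul, Ideal.Quotient.eq_zero_iff_mem.mpr (Ideal.mem_span_singleton_self _), zero_mul]

/-! ### The forward direction: non-principality in the bad case -/

theorem not_principal (F : PowerSeries ℤ_[p])
    (h0 : (p : ℤ_[p]) ^ 2 ∣ PowerSeries.constantCoeff F)
    (h1 : (p : ℤ_[p]) ∣ PowerSeries.coeff 1 F)
    [IsDomain (PowerSeries ℤ_[p] ⧸ Ideal.span {F})]
    [IsLocalRing (PowerSeries ℤ_[p] ⧸ Ideal.span {F})] :
    ¬(IsLocalRing.maximalIdeal (PowerSeries ℤ_[p] ⧸ Ideal.span {F})).IsPrincipal := by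
  rintro ⟨x, hx⟩
  rw [Ideal.submodule_span_eq] at hx
  obtain ⟨g, rfl⟩ := Ideal.Quotient.mk_surjective x
  have hp0 : (p : ℤ_[p]) ∣ PowerSeries.constantCoeff F :=
    (dvd_pow_self (p : ℤ_[p]) two_ne_zero).trans h0
  have hmax := maximalIdeal_eq F hp0
  -- the generator has constant coefficient divisible by p
  have hgm : (Ideal.Quotient.mk (Ideal.span {F})) g ∈
      IsLocalRing.maximalIdeal (PowerSeries ℤ_[p] ⧸ Ideal.span {F}) := by
    rw [hx]
    exact Ideal.mem_span_singleton_self _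
  obtain ⟨γ, hγ⟩ := dvd_constantCoeff_of_mem F hgm
  -- `C p` is a multiple of the generator
  have hCp : (Ideal.Quotient.mk (Ideal.span {F})) (PowerSeries.C (p : ℤ_[p])) ∈
      Ideal.span {(Ideal.Quotient.mk (Ideal.span {F})) g} := by
    rw [← hx, hmax]
    exact Ideal.subset_span (Set.mem_insert _ _)
  obtain ⟨y', hy'⟩ := Ideal.mem_span_singleton.mp hCp
  obtain ⟨y, rfl⟩ := Ideal.Quotient.mk_surjective y'
  rw [← map_mul] at hy'
  obtain ⟨z, hz⟩ := dvd_sub_of_mk_eq F hy'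
  -- hz : C p - g * y = F * z
  have e0 := congrArg (PowerSeries.constantCoeff) hz
  simp only [map_sub, map_mul, PowerSeries.constantCoeff_C] at e0
  -- γ is a unit
  have hpe : (p : ℤ_[p]) * (1 - γ * PowerSeries.constantCoeff y) =
      PowerSeries.constantCoeff F * PowerSeries.constantCoeff z := by
    rw [hγ] at e0
    linear_combination e0
  have hdvd2 : (p : ℤ_[p]) ^ 2 ∣ (p : ℤ_[p]) * (1 - γ * PowerSeries.constantCoeff y) := by
    rw [hpe]
    exact h0.mul_right _
  have hstep : (p : ℤ_[p]) ∣ (1 - γ * PowerSeries.constantCoeff y) := by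
    obtain ⟨w, hw⟩ := hdvd2
    refine ⟨w, mul_left_cancel₀ p_ne_zero ?_⟩
    rw [hw, pow_two]
    ring
  have hγu : IsUnit γ := by
    have hunit : IsUnit (γ * PowerSeries.constantCoeff y) := by
      by_contra hc
      apply not_p_dvd_one (p := p)
      have hd := dvd_of_not_isUnit hc
      have : (1 : ℤ_[p]) = (1 - γ * PowerSeries.constantCoeff y)
          + γ * PowerSeries.constantCoeff y := by ring
      rw [this]
      exact dvd_add hstep hd
    exact isUnit_of_mul_isUnit_left hunit
  -- `X` is a multiple of the generator
  have hX : (Ideal.Quotient.mk (Ideal.span {F})) PowerSeries.X ∈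
      Ideal.span {(Ideal.Quotient.mk (Ideal.span {F})) g} := by
    rw [← hx, hmax]
    exact Ideal.subset_span (Set.mem_insert_iff.mpr (Or.inr rfl))
  obtain ⟨s', hs'⟩ := Ideal.mem_span_singleton.mp hX
  obtain ⟨s, rfl⟩ := Ideal.Quotient.mk_surjective s'
  rw [← map_mul] at hs'
  obtain ⟨t, ht⟩ := dvd_sub_of_mk_eq F hs'
  -- ht : X - g * s = F * t
  have f0 := congrArg (PowerSeries.constantCoeff) ht
  simp only [map_sub, map_mul, PowerSeries.constantCoeff_X] at f0
  -- p ∣ s₀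
  have hps0 : (p : ℤ_[p]) ∣ PowerSeries.constantCoeff s := by
    have hs0 : (p : ℤ_[p]) * (γ * PowerSeries.constantCoeff s) =
        -(PowerSeries.constantCoeff F * PowerSeries.constantCoeff t) := by
      rw [hγ] at f0
      linear_combination -f0
    have : (p : ℤ_[p]) ^ 2 ∣ (p : ℤ_[p]) * (γ * PowerSeries.constantCoeff s) := by
      rw [hs0]
      exact (h0.mul_right _).neg_right
    obtain ⟨w, hw⟩ := this
    have hcancel : γ * PowerSeries.constantCoeff s = (p : ℤ_[p]) * w := by
      refine mul_left_cancel₀ p_ne_zero ?_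
      rw [hw, pow_two]
      ring
    have hpd : (p : ℤ_[p]) ∣ γ * PowerSeries.constantCoeff s := ⟨w, hcancel⟩
    obtain ⟨vγ, hvγ⟩ := hγu
    have hrep : PowerSeries.constantCoeff s =
        ((vγ⁻¹ : ℤ_[p]ˣ) : ℤ_[p]) * (γ * PowerSeries.constantCoeff s) := by
      rw [← hvγ, ← mul_assoc, ← Units.val_mul, inv_mul_cancel, Units.val_one, one_mul]
    rw [hrep]
    exact hpd.mul_left _
  -- now compare coefficients of degree 1
  have f1 := congrArg (PowerSeries.coeff 1) ht
  rw [map_sub, PowerSeries.coeff_one_X, coeff_one_mul, coeff_one_mul] at f1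
  apply not_p_dvd_one (p := p)
  have hone : (1 : ℤ_[p]) =
      PowerSeries.constantCoeff g * PowerSeries.coeff 1 s
        + PowerSeries.coeff 1 g * PowerSeries.constantCoeff s
        + (PowerSeries.constantCoeff F * PowerSeries.coeff 1 t
          + PowerSeries.coeff 1 F * PowerSeries.constantCoeff t) := by
    linear_combination f1
  rw [hone]
  have d1 : (p : ℤ_[p]) ∣ PowerSeries.constantCoeff g * PowerSeries.coeff 1 s :=
    Dvd.dvd.mul_right ⟨γ, hγ⟩ _
  have d2 : (p : ℤ_[p]) ∣ PowerSeries.coeff 1 g * PowerSeries.constantCoeff s :=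
    hps0.mul_left _
  have d3 : (p : ℤ_[p]) ∣ PowerSeries.constantCoeff F * PowerSeries.coeff 1 t :=
    hp0.mul_right _
  have d4 : (p : ℤ_[p]) ∣ PowerSeries.coeff 1 F * PowerSeries.constantCoeff t :=
    h1.mul_right _
  exact dvd_add (dvd_add d1 d2) (dvd_add d3 d4)

end Statement13Aux

/-- Let `f ∈ ℤ_p[T]` be either the constant `p` or an irreducible monic
distinguished polynomial.  Then `ℤ_p[[T]]/(f)` is a discrete valuation ring if and only if
(i) `f = p`, or (ii) `f = T - α` with `α ∈ pℤ_p`, or (iii) `deg f ≥ 2`, all lower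
coefficients of `f` lie in `pℤ_p`, and the constant coefficient lies in `pℤ_p ∖ p²ℤ_p`. -/
theorem discreteValuationRing_quotient_powerSeries_iff
    (p : ℕ) [Fact p.Prime] (f : Polynomial ℤ_[p])
    (hf : f = Polynomial.C (p : ℤ_[p]) ∨
      (f.Monic ∧ (∀ i < f.natDegree, f.coeff i ∈ Ideal.span {(p : ℤ_[p])}) ∧ Irreducible f))
    [IsDomain (PowerSeries ℤ_[p] ⧸ Ideal.span {(f : PowerSeries ℤ_[p])})] :
    IsDiscreteValuationRing (PowerSeries ℤ_[p] ⧸ Ideal.span {(f : PowerSeries ℤ_[p])}) ↔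
      (f = Polynomial.C (p : ℤ_[p]) ∨
        (∃ α : ℤ_[p], α ∈ Ideal.span {(p : ℤ_[p])} ∧ f = Polynomial.X - Polynomial.C α) ∨
        (2 ≤ f.natDegree ∧ (∀ i, 0 < i → i < f.natDegree →
            f.coeff i ∈ Ideal.span {(p : ℤ_[p])}) ∧
          f.coeff 0 ∈ Ideal.span {(p : ℤ_[p])} ∧
          f.coeff 0 ∉ (Ideal.span {(p : ℤ_[p])}) ^ 2)) := by
  constructor
  · intro hdvr
    rcases hf with hfp | ⟨hmon, hcoeffs, hirr⟩
    · exact Or.inl hfp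
    · have hd1 : 1 ≤ f.natDegree := by
        by_contra hc
        push_neg at hc
        have h0 : f.natDegree = 0 := by omega
        have hone : f = 1 := hmon.natDegree_eq_zero.mp h0
        exact hirr.not_isUnit (hone ▸ isUnit_one)
      rcases eq_or_lt_of_le hd1 with hd1' | hd2
      · refine Or.inr (Or.inl ⟨-(f.coeff 0), ?_, ?_⟩)
        · exact neg_mem (hcoeffs 0 (by omega))
        · have heq := hmon.eq_X_add_C hd1'.symm
          rw [map_neg, sub_neg_eq_add]
          exact heq
      · refine Or.inr (Or.inr ⟨hd2, fun i _ hie => hcoeffs i hie, hcoeffs 0 (by omega), ?_⟩)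
        intro hsq
        rw [Ideal.span_singleton_pow, Ideal.mem_span_singleton] at hsq
        letI : IsLocalRing (PowerSeries ℤ_[p] ⧸ Ideal.span {(f : PowerSeries ℤ_[p])}) :=
          Statement13Aux.localQ (f : PowerSeries ℤ_[p])
        letI := hdvr.toIsPrincipalIdealRing
        have h0F : (p : ℤ_[p]) ^ 2 ∣
            PowerSeries.constantCoeff (f : PowerSeries ℤ_[p]) := by
          rw [Polynomial.constantCoeff_coe]; exact hsq
        have h1F : (p : ℤ_[p]) ∣ PowerSeries.coeff 1 (f : PowerSeries ℤ_[p]) := by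
          rw [Polynomial.coeff_coe]
          exact Ideal.mem_span_singleton.mp (hcoeffs 1 (by omega))
        exact Statement13Aux.not_principal (f : PowerSeries ℤ_[p]) h0F h1F
          (IsPrincipalIdealRing.principal _)
  · intro h
    rcases h with hfp | ⟨α, hα, hXα⟩ | ⟨_, _, h0, h0'⟩
    · exact Statement13Aux.dvr_case_i (f : PowerSeries ℤ_[p])
        (by rw [hfp, Polynomial.coe_C])
    · exact Statement13Aux.dvr_case_ii (f : PowerSeries ℤ_[p]) α
        (Ideal.mem_span_singleton.mp hα)
        (by rw [hXα, Polynomial.coe_sub, Polynomial.coe_X, Polynomial.coe_C])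
    · exact Statement13Aux.dvr_case_iii f (Ideal.mem_span_singleton.mp h0)
        (fun hd => h0' (by
          rw [Ideal.span_singleton_pow]
          exact Ideal.mem_span_singleton.mpr hd))
end
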